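/- arXiv:1101.3485 — 5 statements merged into one kernel-verified Lean document; each statement's English description precedes it below -/
import Mathlib

section
/- Let G(s) = C(sE - A)^{-1}B with E ∈ ℝ^{n×n} nonsingular, A ∈ ℝ^{n×n}, B ∈ ℝ^{n×m}, C ∈ ℝ^{p×n}. Given distinct interpolation points s_1,...,s_r ∈ ℂ and tangent directions b_1,...,b_r ∈ ℂ^m, define V_r with i-th column (s_i E - A)^{-1} B b_i. Then for any W_r ∈ ℂ^{n×r}, the reduced system G_r(s) = C_r(sE_r - A_r)^{-1}B_r with E_r = W_r^T E V_r, A_r = W_r^T A V_r, B_r = W_r^T B, C_r = C V_r satisfies G(s_i) b_i = G_r(s_i) b_i for all i = 1,...,r, provided s_i E - A and s_i E_r - A_r are invertible for each i. -/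
/-! Since `V eᵢ = (sᵢE - A)⁻¹ B bᵢ`, the Galerkin system `Wᵀ(sᵢE - A)V x = Wᵀ B bᵢ` of the
reduced model is solved by `x = eᵢ`, and by uniqueness this is its only solution; hence
`Gᵣ(sᵢ) bᵢ = C V eᵢ = C (sᵢE - A)⁻¹ B bᵢ = G(sᵢ) bᵢ`. -/

open Matrix

namespace Matrix

variable {ν ρ ι κ α : Type*} [Fintype ν] [CommRing α]

theorem projected_inv_mulVec_eq_of_mulVec_eq [Fintype ρ] [DecidableEq ρ] {L : Matrix ρ ν α}
    {K : Matrix ν ν α} {V : Matrix ν ρ α} (hR : IsUnit (L * K * V).det) {x : ρ → α} {u : ν → α}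
    (hx : K *ᵥ (V *ᵥ x) = u) : (L * K * V)⁻¹ *ᵥ (L *ᵥ u) = x := by
  let := invertibleOfIsUnitDet _ hR
  exact inv_mulVec_eq_vec (by rw [← hx, mulVec_mulVec, mulVec_mulVec])

theorem projected_mulVec_eq_of_mulVec_eq [DecidableEq ν] [Fintype ρ] [DecidableEq ρ] [Fintype κ]
    (C : Matrix ι ν α) (B : Matrix ν κ α) (L : Matrix ρ ν α) {K : Matrix ν ν α}
    {V : Matrix ν ρ α} (hK : IsUnit K.det) (hR : IsUnit (L * K * V).det) {x : ρ → α} {b : κ → α}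
    (hx : V *ᵥ x = (K⁻¹ * B) *ᵥ b) :
    (C * K⁻¹ * B) *ᵥ b = ((C * V) * (L * K * V)⁻¹ * (L * B)) *ᵥ b := by
  have hKx : K *ᵥ (V *ᵥ x) = B *ᵥ b := by
    rw [hx, mulVec_mulVec, mul_nonsing_inv_cancel_left _ _ hK]
  calc (C * K⁻¹ * B) *ᵥ b = C *ᵥ (V *ᵥ x) := by rw [hx, mulVec_mulVec, Matrix.mul_assoc]
    _ = (C * V) *ᵥ ((L * K * V)⁻¹ *ᵥ (L *ᵥ (B *ᵥ b))) := by
        rw [projected_inv_mulVec_eq_of_mulVec_eq hR hKx, mulVec_mulVec]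
    _ = ((C * V) * (L * K * V)⁻¹ * (L * B)) *ᵥ b := by
        simp only [mulVec_mulVec, Matrix.mul_assoc]

theorem smul_mul_sub_mul_eq_mul_smul_sub_mul (s : α) (L : Matrix ρ ν α)
    (E A : Matrix ν ν α) (V : Matrix ν ρ α) :
    s • (L * E * V) - L * A * V = L * (s • E - A) * V := by
  rw [Matrix.mul_sub, Matrix.sub_mul, Matrix.mul_smul, Matrix.smul_mul]

end Matrix

theorem stmt0_general (n m p r : ℕ)
    (E A : Matrix (Fin n) (Fin n) ℝ) (B : Matrix (Fin n) (Fin m) ℝ)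
    (C : Matrix (Fin p) (Fin n) ℝ)
    (s : Fin r → ℂ)
    (b : Fin r → Fin m → ℂ)
    (V W : Matrix (Fin n) (Fin r) ℂ)
    (hV : ∀ i j, V j i =
      (((s i • E.map Complex.ofReal - A.map Complex.ofReal)⁻¹ * B.map Complex.ofReal) *ᵥ b i) j)
    (hinv : ∀ i, IsUnit (s i • E.map Complex.ofReal - A.map Complex.ofReal).det)
    (hinvr : ∀ i, IsUnit (s i • (Wᵀ * E.map Complex.ofReal * V) - Wᵀ * A.map Complex.ofReal * V).det) :
    ∀ i, (C.map Complex.ofReal *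
          (s i • E.map Complex.ofReal - A.map Complex.ofReal)⁻¹ * B.map Complex.ofReal) *ᵥ b i
      = ((C.map Complex.ofReal * V) *
          (s i • (Wᵀ * E.map Complex.ofReal * V) - Wᵀ * A.map Complex.ofReal * V)⁻¹ *
          (Wᵀ * B.map Complex.ofReal)) *ᵥ b i := by
  intro i
  have hcol : V *ᵥ Pi.single i 1 = ((s i • E.map Complex.ofReal - A.map Complex.ofReal)⁻¹ *
      B.map Complex.ofReal) *ᵥ b i := by
    ext j
    rw [mulVec_single_one, col_apply, hV]
  have hR := hinvr i
  rw [smul_mul_sub_mul_eq_mul_smul_sub_mul] at hR ⊢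
  exact projected_mulVec_eq_of_mulVec_eq _ _ _ (hinv i) hR hcol

theorem stmt0 (n m p r : ℕ)
    (E A : Matrix (Fin n) (Fin n) ℝ) (B : Matrix (Fin n) (Fin m) ℝ)
    (C : Matrix (Fin p) (Fin n) ℝ) (hE : IsUnit E.det)
    (s : Fin r → ℂ) (hs : Function.Injective s)
    (b : Fin r → Fin m → ℂ)
    (V W : Matrix (Fin n) (Fin r) ℂ)
    (hV : ∀ i j, V j i =
      (((s i • E.map Complex.ofReal - A.map Complex.ofReal)⁻¹ * B.map Complex.ofReal) *ᵥ b i) j)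
    (hinv : ∀ i, IsUnit (s i • E.map Complex.ofReal - A.map Complex.ofReal).det)
    (hinvr : ∀ i, IsUnit (s i • (Wᵀ * E.map Complex.ofReal * V) - Wᵀ * A.map Complex.ofReal * V).det) :
    ∀ i, (C.map Complex.ofReal *
          (s i • E.map Complex.ofReal - A.map Complex.ofReal)⁻¹ * B.map Complex.ofReal) *ᵥ b i
      = ((C.map Complex.ofReal * V) *
          (s i • (Wᵀ * E.map Complex.ofReal * V) - Wᵀ * A.map Complex.ofReal * V)⁻¹ *
          (Wᵀ * B.map Complex.ofReal)) *ᵥ b i :=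
  stmt0_general n m p r E A B C s b V W hV hinv hinvr
end

section
/- Let G(s) = C(sE-A)^{-1}B, ŝ ∈ ℂ, b̂ ∈ ℂ^m, and suppose V_r ∈ ℂ^{n×r} satisfies ((ŝE - A)^{-1}E)^{k-1}(ŝE - A)^{-1}B b̂ ∈ Range(V_r) for k = 1,...,N. Then for any W_r ∈ ℂ^{n×r} (with ŝE - A and ŝE_r - A_r invertible), the reduced model defined by E_r = W_r^T E V_r, A_r = W_r^T A V_r, B_r = W_r^T B, C_r = C V_r satisfies G^{(ℓ)}(ŝ) b̂ = G_r^{(ℓ)}(ŝ) b̂ for ℓ = 0,...,N-1, where G^{(ℓ)} denotes the ℓ-th derivative of the transfer function. -/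
/-!
Write `M = ŝE - A` and `M_r = W_rᵀ M V_r`. Near `ŝ`, `(zE - A)⁻¹ = (1 + (z - ŝ) M⁻¹E)⁻¹ M⁻¹` is a
geometric series, so `G⁽ˡ⁾(ŝ) b̂ = (-1)ˡ l! C (M⁻¹E)ˡ M⁻¹ B b̂`, and likewise for the reduced model.
The map `V_r M_r⁻¹ W_rᵀ M` fixes `Range V_r`; applying it to the moments `(M⁻¹E)ᵏ M⁻¹ B b̂`, which
lie in `Range V_r` by hypothesis, shows by induction on `k` that they are `V_r` times the reduced
moments, whence the derivatives agree after multiplying by `C`.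
-/

open Matrix
open scoped Nat

theorem HasFPowerSeriesAt.iteratedDeriv_eq {𝕜 F : Type*} [NontriviallyNormedField 𝕜]
    [NormedAddCommGroup F] [NormedSpace 𝕜 F] [CompleteSpace F]
    {f : 𝕜 → F} {p : FormalMultilinearSeries 𝕜 𝕜 F} {x : 𝕜} (h : HasFPowerSeriesAt f p x)
    (n : ℕ) : iteratedDeriv n f x = n ! • p n (fun _ ↦ 1) := by
  obtain ⟨r, hr⟩ := h
  rw [iteratedDeriv_eq_iteratedFDeriv, hr.factorial_smul]

section Resolvent

open scoped Ring

variable {𝕜 R : Type*} [NontriviallyNormedField 𝕜] [NormedRing R] [NormedAlgebra 𝕜 R]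
  [HasSummableGeomSeries R]

theorem hasFPowerSeriesAt_ringInverse_smul_sub (P Q : R) {s : 𝕜} (h : IsUnit (s • P - Q)) :
    HasFPowerSeriesAt (fun z : 𝕜 ↦ (z • P - Q)⁻¹ʳ)
      ((ContinuousLinearMap.mul 𝕜 R).flip (s • P - Q)⁻¹ʳ |>.compFormalMultilinearSeries
        ((formalMultilinearSeries_geometric 𝕜 R).compContinuousLinearMap
          ((ContinuousLinearMap.id 𝕜 𝕜).smulRight (-((s • P - Q)⁻¹ʳ * P))))) s := by
  set K := (s • P - Q)⁻¹ʳ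
  set u := (ContinuousLinearMap.id 𝕜 𝕜).smulRight (-(K * P))
  have hfactor : ∀ z : 𝕜, z • P - Q = (s • P - Q) * (1 - u (z - s)) := by
    intro z
    rw [show 1 - u (z - s) = 1 + (z - s) • (K * P) by simp [u], mul_add, mul_one, mul_smul_comm,
      ← mul_assoc, Ring.mul_inverse_cancel _ h, one_mul, sub_smul]
    abel
  have hgeom : HasFPowerSeriesAt (fun y : 𝕜 ↦ (1 - u y)⁻¹ʳ)
      ((formalMultilinearSeries_geometric 𝕜 R).compContinuousLinearMap u) 0 :=
    HasFPowerSeriesAt.compContinuousLinearMap (f := fun x : R ↦ (1 - x)⁻¹ʳ)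
      (by simpa using (hasFPowerSeriesOnBall_inverse_one_sub 𝕜 R).hasFPowerSeriesAt)
  obtain ⟨r, hr⟩ := hgeom.comp_sub s
  rw [zero_add] at hr
  refine ⟨r, ?_⟩
  convert ((ContinuousLinearMap.mul 𝕜 R).flip K).comp_hasFPowerSeriesOnBall hr using 2 with z
  simp [hfactor z, Ring.inverse_mul (Or.inl h), K]

theorem iteratedDeriv_clm_ringInverse_smul_sub {F : Type*} [NormedAddCommGroup F]
    [NormedSpace 𝕜 F] [CompleteSpace F] (L : R →L[𝕜] F) (P Q : R) {s : 𝕜}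
    (h : IsUnit (s • P - Q)) (n : ℕ) :
    iteratedDeriv n (fun z : 𝕜 ↦ L (z • P - Q)⁻¹ʳ) s
      = n ! • L ((-((s • P - Q)⁻¹ʳ * P)) ^ n * (s • P - Q)⁻¹ʳ) := by
  obtain ⟨r, hr⟩ := hasFPowerSeriesAt_ringInverse_smul_sub P Q h
  refine ((L.comp_hasFPowerSeriesOnBall hr).hasFPowerSeriesAt.iteratedDeriv_eq n).trans ?_
  simp only [ContinuousLinearMap.compFormalMultilinearSeries_apply,
    ContinuousLinearMap.compContinuousMultilinearMap_coe, Function.comp_apply,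
    FormalMultilinearSeries.compContinuousLinearMap_apply, formalMultilinearSeries_geometric,
    ContinuousMultilinearMap.mkPiAlgebraFin_apply, Function.comp_def,
    ContinuousLinearMap.smulRight_apply, ContinuousLinearMap.id_apply, one_smul, List.ofFn_const,
    List.prod_replicate, ContinuousLinearMap.flip_apply, ContinuousLinearMap.mul_apply']

end Resolvent

open scoped Matrix.Norms.Operator in
theorem iteratedDeriv_mul_inv_smul_sub_mul_mulVec {𝕜 : Type*} [NontriviallyNormedField 𝕜]
    [CompleteSpace 𝕜] {ι κ μ : Type*} [Fintype ι] [DecidableEq ι] [Fintype κ] [Fintype μ]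
    (P Q : Matrix ι ι 𝕜) (C : Matrix κ ι 𝕜) (B : Matrix ι μ 𝕜) (b : μ → 𝕜) {s : 𝕜}
    (h : IsUnit (s • P - Q).det) (n : ℕ) :
    iteratedDeriv n (fun z : 𝕜 ↦ (C * (z • P - Q)⁻¹ * B) *ᵥ b) s
      = ((-1 : 𝕜) ^ n * n !) • C *ᵥ (((s • P - Q)⁻¹ * P) ^ n *ᵥ ((s • P - Q)⁻¹ *ᵥ (B *ᵥ b))) := by
  -- the operator-norm uniformity is not reducibly the product one, so state completeness for it
  have : @CompleteSpace (Matrix ι ι 𝕜) PseudoMetricSpace.toUniformSpace :=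
    FiniteDimensional.complete 𝕜 _
  let L : Matrix ι ι 𝕜 →ₗ[𝕜] κ → 𝕜 :=
    { toFun M := C *ᵥ (M *ᵥ (B *ᵥ b))
      map_add' M M' := by simp only [add_mulVec, mulVec_add]
      map_smul' c M := by simp only [smul_mulVec, mulVec_smul, RingHom.id_apply] }
  have hL : (fun z : 𝕜 ↦ (C * (z • P - Q)⁻¹ * B) *ᵥ b)
      = fun z ↦ LinearMap.toContinuousLinearMap L (Ring.inverse (z • P - Q)) := by
    funext z
    simp [L, nonsing_inv_eq_ringInverse, mulVec_mulVec, Matrix.mul_assoc]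
  rw [hL]
  refine (iteratedDeriv_clm_ringInverse_smul_sub (LinearMap.toContinuousLinearMap L) P Q
    ((isUnit_iff_isUnit_det _).mpr h) n).trans ?_
  rw [← nonsing_inv_eq_ringInverse, ← neg_one_smul 𝕜 ((s • P - Q)⁻¹ * P), smul_pow]
  show n ! • C *ᵥ (_ *ᵥ (B *ᵥ b)) = _
  rw [smul_mul_assoc, smul_mulVec, mulVec_smul, ← mulVec_mulVec, ← Nat.cast_smul_eq_nsmul 𝕜,
    smul_smul, mul_comm]

section Projection

variable {K ι κ : Type*} [Field K] [Fintype ι] [Fintype κ] [DecidableEq κ]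

theorem mulVec_inv_mul_mulVec_of_mem_range (M : Matrix ι ι K) (V : Matrix ι κ K)
    (W : Matrix κ ι K) (hMr : IsUnit (W * M * V).det) {x : ι → K}
    (hx : x ∈ Set.range V.mulVec) : V *ᵥ ((W * M * V)⁻¹ *ᵥ (W *ᵥ (M *ᵥ x))) = x := by
  obtain ⟨y, rfl⟩ := hx
  congr 1
  rw [mulVec_mulVec, mulVec_mulVec, mulVec_mulVec,
    show (W * M * V)⁻¹ * W * M * V = (W * M * V)⁻¹ * (W * M * V) by simp only [Matrix.mul_assoc],
    nonsing_inv_mul _ hMr, one_mulVec]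

theorem mulVec_reducedMoment_eq [DecidableEq ι] (M E : Matrix ι ι K) (V : Matrix ι κ K)
    (W : Matrix κ ι K) (u : ι → K) (hM : IsUnit M.det) (hMr : IsUnit (W * M * V).det) {N : ℕ}
    (hrange : ∀ k < N, (M⁻¹ * E) ^ k *ᵥ (M⁻¹ *ᵥ u) ∈ Set.range V.mulVec) :
    ∀ k < N, V *ᵥ (((W * M * V)⁻¹ * (W * E * V)) ^ k *ᵥ ((W * M * V)⁻¹ *ᵥ (W *ᵥ u)))
      = (M⁻¹ * E) ^ k *ᵥ (M⁻¹ *ᵥ u) := by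
  have hMM : ∀ v, M *ᵥ (M⁻¹ *ᵥ v) = v := fun v ↦ by
    rw [mulVec_mulVec, mul_nonsing_inv _ hM, one_mulVec]
  intro k hk
  induction k with
  | zero =>
    simp only [pow_zero, one_mulVec]
    rw [← hMM u, mulVec_inv_mul_mulVec_of_mem_range M V W hMr (by simpa using hrange 0 hk),
      hMM]
  | succ k ih =>
    have hstep : (M⁻¹ * E) ^ (k + 1) *ᵥ (M⁻¹ *ᵥ u)
        = M⁻¹ *ᵥ (E *ᵥ (V *ᵥ (((W * M * V)⁻¹ * (W * E * V)) ^ k *ᵥ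
          ((W * M * V)⁻¹ *ᵥ (W *ᵥ u))))) := by
      rw [ih (by omega), _root_.pow_succ', ← mulVec_mulVec, ← mulVec_mulVec]
    rw [← mulVec_inv_mul_mulVec_of_mem_range M V W hMr (hrange (k + 1) hk), hstep, hMM,
      _root_.pow_succ', ← mulVec_mulVec]
    simp only [mulVec_mulVec, Matrix.mul_assoc]

end Projection

theorem stmt1_general (n m p r N : ℕ)
    (E A : Matrix (Fin n) (Fin n) ℝ) (B : Matrix (Fin n) (Fin m) ℝ)
    (C : Matrix (Fin p) (Fin n) ℝ)
    (sh : ℂ) (bh : Fin m → ℂ)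
    (V W : Matrix (Fin n) (Fin r) ℂ)
    (hmem : ∀ k, 1 ≤ k → k ≤ N →
      ((((sh • E.map Complex.ofReal - A.map Complex.ofReal)⁻¹ * E.map Complex.ofReal) ^ (k - 1) *
        (sh • E.map Complex.ofReal - A.map Complex.ofReal)⁻¹ * B.map Complex.ofReal) *ᵥ bh)
        ∈ Set.range V.mulVec)
    (hinv : IsUnit (sh • E.map Complex.ofReal - A.map Complex.ofReal).det)
    (hinvr : IsUnit (sh • (Wᵀ * E.map Complex.ofReal * V) - Wᵀ * A.map Complex.ofReal * V).det) :
    ∀ ℓ, ℓ < N →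
      iteratedDeriv ℓ (fun z : ℂ =>
        (C.map Complex.ofReal * (z • E.map Complex.ofReal - A.map Complex.ofReal)⁻¹ *
          B.map Complex.ofReal) *ᵥ bh) sh
      = iteratedDeriv ℓ (fun z : ℂ =>
        ((C.map Complex.ofReal * V) *
          (z • (Wᵀ * E.map Complex.ofReal * V) - Wᵀ * A.map Complex.ofReal * V)⁻¹ *
          (Wᵀ * B.map Complex.ofReal)) *ᵥ bh) sh := by
  intro ℓ hℓ
  set Ec := E.map Complex.ofReal
  set Ac := A.map Complex.ofReal
  set Bc := B.map Complex.ofReal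
  have hreduced : sh • (Wᵀ * Ec * V) - Wᵀ * Ac * V = Wᵀ * (sh • Ec - Ac) * V := by
    rw [Matrix.mul_sub, Matrix.sub_mul, Matrix.mul_smul, Matrix.smul_mul]
  rw [iteratedDeriv_mul_inv_smul_sub_mul_mulVec _ _ _ _ _ hinv,
    iteratedDeriv_mul_inv_smul_sub_mul_mulVec _ _ _ _ _ hinvr, hreduced, ← mulVec_mulVec,
    ← mulVec_mulVec bh Wᵀ]
  rw [hreduced] at hinvr
  rw [mulVec_reducedMoment_eq _ Ec V Wᵀ _ hinv hinvr (N := N) (fun k hk ↦ ?_) ℓ hℓ]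
  simpa [mulVec_mulVec, Matrix.mul_assoc] using hmem (k + 1) (by omega) (by omega)

theorem stmt1 (n m p r N : ℕ)
    (E A : Matrix (Fin n) (Fin n) ℝ) (B : Matrix (Fin n) (Fin m) ℝ)
    (C : Matrix (Fin p) (Fin n) ℝ) (hE : IsUnit E.det)
    (sh : ℂ) (bh : Fin m → ℂ)
    (V W : Matrix (Fin n) (Fin r) ℂ)
    (hmem : ∀ k, 1 ≤ k → k ≤ N →
      ((((sh • E.map Complex.ofReal - A.map Complex.ofReal)⁻¹ * E.map Complex.ofReal) ^ (k - 1) *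
        (sh • E.map Complex.ofReal - A.map Complex.ofReal)⁻¹ * B.map Complex.ofReal) *ᵥ bh)
        ∈ Set.range V.mulVec)
    (hinv : IsUnit (sh • E.map Complex.ofReal - A.map Complex.ofReal).det)
    (hinvr : IsUnit (sh • (Wᵀ * E.map Complex.ofReal * V) - Wᵀ * A.map Complex.ofReal * V).det) :
    ∀ ℓ, ℓ < N →
      iteratedDeriv ℓ (fun z : ℂ =>
        (C.map Complex.ofReal * (z • E.map Complex.ofReal - A.map Complex.ofReal)⁻¹ *
          B.map Complex.ofReal) *ᵥ bh) sh
      = iteratedDeriv ℓ (fun z : ℂ =>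
        ((C.map Complex.ofReal * V) *
          (z • (Wᵀ * E.map Complex.ofReal * V) - Wᵀ * A.map Complex.ofReal * V)⁻¹ *
          (Wᵀ * B.map Complex.ofReal)) *ᵥ bh) sh :=
  stmt1_general n m p r N E A B C sh bh V W hmem hinv hinvr
end

section
/- Let (J,R,Q,B) define a port-Hamiltonian system (J skew-symmetric, R symmetric PSD, Q symmetric positive definite, B ∈ ℝ^{n×m}). Let V̂_r ∈ ℝ^{n×r} have full column rank and define Ŵ_r = Q V̂_r (V̂_r^T Q V̂_r)^{-1}, J_r = Ŵ_r^T J Ŵ_r, R_r = Ŵ_r^T R Ŵ_r, Q_r = V̂_r^T Q V̂_r, B_r = Ŵ_r^T B. Then J_r is skew-symmetric, R_r is symmetric positive semidefinite, Q_r is symmetric positive definite, and Ŵ_r^T V̂_r = I_r. -/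
open Matrix

noncomputable section

/-!
Everything is a congruence `M ↦ Wᵀ M W`, which preserves skew-symmetry and positive
semidefiniteness for any `W`, and positive definiteness when `W` is injective; full column
rank of `V̂` makes `V̂ᵀ Q V̂` positive definite, hence invertible, and then
`Ŵᵀ V̂ = (V̂ᵀ Q V̂)⁻ᵀ (V̂ᵀ Q V̂) = 1` because `V̂ᵀ Q V̂` is symmetric.
-/

namespace Matrix

variable {K : Type*} {m n : Type*} [Fintype n]

theorem mulVec_injective_of_rank_eq_card [Field K] {A : Matrix m n K}
    (hA : A.rank = Fintype.card n) : Function.Injective A.mulVec := by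
  rw [mulVec_injective_iff, linearIndependent_iff_card_eq_finrank_span, ← hA,
    rank_eq_finrank_span_cols]
  rfl

theorem transpose_mul_mul_same_of_transpose_eq_neg [CommRing K] {J : Matrix n n K}
    (hJ : Jᵀ = -J) (W : Matrix n m K) : (Wᵀ * J * W)ᵀ = -(Wᵀ * J * W) := by
  rw [transpose_mul, transpose_mul, transpose_transpose, hJ, Matrix.neg_mul, Matrix.mul_neg,
    Matrix.mul_assoc]

theorem transpose_mul_inv_mul_eq_one [Fintype m] [DecidableEq m] [CommRing K] {Q : Matrix n n K}
    (hQ : Qᵀ = Q) (V : Matrix n m K) (hdet : IsUnit (Vᵀ * Q * V).det) :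
    (Q * V * (Vᵀ * Q * V)⁻¹)ᵀ * V = 1 := by
  have hsymm : (Vᵀ * Q * V)ᵀ = Vᵀ * Q * V := by
    rw [transpose_mul, transpose_mul, transpose_transpose, hQ, Matrix.mul_assoc]
  calc (Q * V * (Vᵀ * Q * V)⁻¹)ᵀ * V = ((Vᵀ * Q * V)⁻¹)ᵀ * (Vᵀ * Q * V) := by
        rw [transpose_mul, transpose_mul, hQ, Matrix.mul_assoc, Matrix.mul_assoc]
    _ = 1 := by rw [transpose_nonsing_inv, hsymm, nonsing_inv_mul _ hdet]

end Matrix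

theorem stmt7_general (n r : ℕ) (J R Q : Matrix (Fin n) (Fin n) ℝ)
    (hJ : Jᵀ = -J) (hR : R.PosSemidef) (hQ : Q.PosDef)
    (V : Matrix (Fin n) (Fin r) ℝ) (hV : V.rank = r) :
    ((Q * V * (Vᵀ * Q * V)⁻¹)ᵀ * J * (Q * V * (Vᵀ * Q * V)⁻¹))ᵀ
        = -((Q * V * (Vᵀ * Q * V)⁻¹)ᵀ * J * (Q * V * (Vᵀ * Q * V)⁻¹)) ∧
    ((Q * V * (Vᵀ * Q * V)⁻¹)ᵀ * R * (Q * V * (Vᵀ * Q * V)⁻¹)).PosSemidef ∧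
    (Vᵀ * Q * V).PosDef ∧
    (Q * V * (Vᵀ * Q * V)⁻¹)ᵀ * V = 1 := by
  have hVinj : Function.Injective V.mulVec :=
    mulVec_injective_of_rank_eq_card (by rw [hV, Fintype.card_fin])
  have hQr : (Vᵀ * Q * V).PosDef := by
    simpa only [conjTranspose_eq_transpose_of_trivial] using
      hQ.conjTranspose_mul_mul_same hVinj
  refine ⟨transpose_mul_mul_same_of_transpose_eq_neg hJ _, ?_, hQr,
    transpose_mul_inv_mul_eq_one hQ.isHermitian.eq V hQr.det_pos.ne'.isUnit⟩
  simpa only [conjTranspose_eq_transpose_of_trivial] using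
    hR.conjTranspose_mul_mul_same (Q * V * (Vᵀ * Q * V)⁻¹)

theorem stmt7 (n m r : ℕ) (J R Q : Matrix (Fin n) (Fin n) ℝ) (B : Matrix (Fin n) (Fin m) ℝ)
    (hJ : Jᵀ = -J) (hR : R.PosSemidef) (hQ : Q.PosDef)
    (V : Matrix (Fin n) (Fin r) ℝ) (hV : V.rank = r) :
    ((Q * V * (Vᵀ * Q * V)⁻¹)ᵀ * J * (Q * V * (Vᵀ * Q * V)⁻¹))ᵀ
        = -((Q * V * (Vᵀ * Q * V)⁻¹)ᵀ * J * (Q * V * (Vᵀ * Q * V)⁻¹)) ∧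
    ((Q * V * (Vᵀ * Q * V)⁻¹)ᵀ * R * (Q * V * (Vᵀ * Q * V)⁻¹)).PosSemidef ∧
    (Vᵀ * Q * V).PosDef ∧
    (Q * V * (Vᵀ * Q * V)⁻¹)ᵀ * V = 1 :=
  stmt7_general n r J R Q hJ hR hQ V hV
end
end

section
/- Let (J,R,Q,B) be a port-Hamiltonian system, V̂_r ∈ ℝ^{n×r} full column rank, and Ŵ_r = Q V̂_r (V̂_r^T Q V̂_r)^{-1}. Then the projected system matrix factors structurally: Ŵ_r^T (J - R) Q V̂_r = (J_r - R_r) Q_r, where J_r = Ŵ_r^T J Ŵ_r, R_r = Ŵ_r^T R Ŵ_r, Q_r = V̂_r^T Q V̂_r. Moreover the projected output matrix satisfies B^T Q V̂_r = B_r^T Q_r with B_r = Ŵ_r^T B. -/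
open Matrix

noncomputable section

/-
Everything follows from the single identity `Ŵ_r * Q_r = Q * V̂_r`, valid as soon as
`Q_r = V̂_rᵀ Q V̂_r` is invertible: then `Ŵ_rᵀ (J - R) Q V̂_r = Ŵ_rᵀ (J - R) Ŵ_r Q_r` and
`Bᵀ Q V̂_r = Bᵀ Ŵ_r Q_r`. Invertibility holds because `Q_r` is positive definite, `Q` being
positive definite and `V̂_r` injective (full column rank).
-/

namespace Matrix

theorem mulVec_injective_of_rank_eq_card_s9 {m n K : Type*} [Fintype m] [Fintype n] [Field K]
    {V : Matrix m n K} (hV : V.rank = Fintype.card n) : Function.Injective V.mulVec := by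
  rw [mulVec_injective_iff, linearIndependent_iff_card_eq_finrank_span, ← hV,
    rank_eq_finrank_span_cols]
  rfl

theorem PosDef.transpose_mul_mul_of_rank_eq_card {m n : Type*} [Fintype m] [Fintype n]
    {Q : Matrix m m ℝ} (hQ : Q.PosDef) {V : Matrix m n ℝ} (hV : V.rank = Fintype.card n) :
    (Vᵀ * Q * V).PosDef := by
  simpa only [conjTranspose_eq_transpose_of_trivial] using
    hQ.conjTranspose_mul_mul_same (mulVec_injective_of_rank_eq_card_s9 hV)

section ProjectionIdentities

variable {m k p α : Type*} [Fintype m] [Fintype k] [CommRing α]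
  {W : Matrix m k α} {Qr : Matrix k k α} {P : Matrix m m α} {V : Matrix m k α}

theorem transpose_mul_sub_mul_mul_eq_of_mul_eq (hW : W * Qr = P * V) (J R : Matrix m m α) :
    Wᵀ * ((J - R) * P) * V = (Wᵀ * J * W - Wᵀ * R * W) * Qr := by
  simp only [Matrix.mul_assoc, hW, Matrix.sub_mul, Matrix.mul_sub]

theorem transpose_mul_mul_eq_of_mul_eq (hW : W * Qr = P * V) (B : Matrix m p α) :
    Bᵀ * P * V = (Wᵀ * B)ᵀ * Qr := by
  rw [transpose_mul, transpose_transpose, Matrix.mul_assoc, Matrix.mul_assoc, hW]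

end ProjectionIdentities

end Matrix

theorem stmt9_general (n m r : ℕ) (J R Q : Matrix (Fin n) (Fin n) ℝ) (B : Matrix (Fin n) (Fin m) ℝ)
    (hQ : Q.PosDef)
    (V : Matrix (Fin n) (Fin r) ℝ) (hV : V.rank = r) :
    (Q * V * (Vᵀ * Q * V)⁻¹)ᵀ * ((J - R) * Q) * V
      = ((Q * V * (Vᵀ * Q * V)⁻¹)ᵀ * J * (Q * V * (Vᵀ * Q * V)⁻¹)
          - (Q * V * (Vᵀ * Q * V)⁻¹)ᵀ * R * (Q * V * (Vᵀ * Q * V)⁻¹)) * (Vᵀ * Q * V) ∧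
    Bᵀ * Q * V = ((Q * V * (Vᵀ * Q * V)⁻¹)ᵀ * B)ᵀ * (Vᵀ * Q * V) := by
  have hQr : (Vᵀ * Q * V).PosDef :=
    hQ.transpose_mul_mul_of_rank_eq_card (by rwa [Fintype.card_fin])
  have hW : Q * V * (Vᵀ * Q * V)⁻¹ * (Vᵀ * Q * V) = Q * V :=
    nonsing_inv_mul_cancel_right _ _ hQr.det_pos.ne'.isUnit
  exact ⟨transpose_mul_sub_mul_mul_eq_of_mul_eq hW J R, transpose_mul_mul_eq_of_mul_eq hW B⟩

theorem stmt9 (n m r : ℕ) (J R Q : Matrix (Fin n) (Fin n) ℝ) (B : Matrix (Fin n) (Fin m) ℝ)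
    (hJ : Jᵀ = -J) (hR : R.PosSemidef) (hQ : Q.PosDef)
    (V : Matrix (Fin n) (Fin r) ℝ) (hV : V.rank = r) :
    (Q * V * (Vᵀ * Q * V)⁻¹)ᵀ * ((J - R) * Q) * V
      = ((Q * V * (Vᵀ * Q * V)⁻¹)ᵀ * J * (Q * V * (Vᵀ * Q * V)⁻¹)
          - (Q * V * (Vᵀ * Q * V)⁻¹)ᵀ * R * (Q * V * (Vᵀ * Q * V)⁻¹)) * (Vᵀ * Q * V) ∧
    Bᵀ * Q * V = ((Q * V * (Vᵀ * Q * V)⁻¹)ᵀ * B)ᵀ * (Vᵀ * Q * V) :=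
  stmt9_general n m r J R Q B hQ V hV
end
end

section
/- Let G be a port-Hamiltonian system (J,R,Q,B) and let (J̃,R̃,Q̃,B̃) = (TJT^T, TRT^T, T^{-T}QT^{-1}, TB) be the transformed realization under an invertible T ∈ ℝ^{n×n}. Given distinct interpolation points s_1,...,s_r with tangent directions b_1,...,b_r (closed under conjugation), let Ṽ_r and V_r be the respective primitive interpolatory basis matrices with i-th columns (s_iI - (J̃-R̃)Q̃)^{-1}B̃b_i and (s_iI - (J-R)Q)^{-1}Bb_i. Then Ṽ_r = T V_r, and for any invertible M making V̂_r = V_rM real, the reduced quantities J_r, R_r, Q_r, B_r produced by the structure-preserving projection from either realization (using Ŵ_r = QV̂_r(V̂_r^TQV̂_r)^{-1} resp. its transformed analogue) are identical. -/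
/-!
A change of coordinates `x ↦ T x` conjugates the system matrix, `(J̃ - R̃) Q̃ = T (J - R) Q T⁻¹`,
so every resolvent transforms as `(s I - (J̃ - R̃) Q̃)⁻¹ B̃ = T (s I - (J - R) Q)⁻¹ B` and the
interpolatory basis becomes `T V`. The Gram matrix `V̂ᵀ Q V̂` is invariant under the congruence
`Q ↦ T⁻ᵀ Q T⁻¹`, hence `Ŵ ↦ T⁻ᵀ Ŵ`, and the factors `T⁻¹` and `T` cancel in every reduced matrix.
-/

open Matrix

noncomputable section

namespace Matrix

variable {ι κ ρ : Type*} [Fintype ι]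

theorem eq_mul_of_cols {K : Type*} [CommSemiring K] [Fintype κ] {T : Matrix ι ι K}
    {X Xt : ρ → Matrix ι κ K} {b : ρ → κ → K} {V Vt : Matrix ι ρ K}
    (hV : ∀ i j, V j i = (X i *ᵥ b i) j) (hVt : ∀ i j, Vt j i = (Xt i *ᵥ b i) j)
    (hX : ∀ i, Xt i = T * X i) : Vt = T * V := by
  ext j i
  rw [hVt, hX, ← mulVec_mulVec]
  simp only [hV, mul_apply, mulVec, dotProduct]

variable [DecidableEq ι]

theorem map_nonsing_inv {K L : Type*} [CommRing K] [CommRing L] (f : K →+* L)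
    {A : Matrix ι ι K} (hA : IsUnit A.det) : (A⁻¹).map f = (A.map f)⁻¹ := by
  refine (inv_eq_right_inv ?_).symm
  rw [← RingHom.mapMatrix_apply, ← RingHom.mapMatrix_apply, ← map_mul, mul_nonsing_inv A hA,
    map_one]

section CommRing

variable {K : Type*} [CommRing K] {T : Matrix ι ι K} (hT : IsUnit T.det)
include hT

theorem inv_smul_one_sub_conj_mul (s : K) (A : Matrix ι ι K) (B : Matrix ι κ K) :
    (s • 1 - T * A * T⁻¹)⁻¹ * (T * B) = T * ((s • 1 - A)⁻¹ * B) := by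
  have hconj : s • 1 - T * A * T⁻¹ = T * (s • 1 - A) * T⁻¹ := by
    rw [Matrix.mul_sub, Matrix.sub_mul, Matrix.mul_smul, Matrix.mul_one, Matrix.smul_mul,
      mul_nonsing_inv T hT]
  rw [hconj, mul_inv_rev, mul_inv_rev, nonsing_inv_nonsing_inv T hT]
  simp only [Matrix.mul_assoc, nonsing_inv_mul_cancel_left T B hT]

theorem transpose_mul_transpose_nonsing_inv : Tᵀ * (T⁻¹)ᵀ = 1 := by
  rw [← transpose_mul, nonsing_inv_mul T hT, transpose_one]

theorem conj_sub_conj_mul_congr_inv (J R Q : Matrix ι ι K) :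
    (T * J * Tᵀ - T * R * Tᵀ) * ((T⁻¹)ᵀ * Q * T⁻¹) = T * ((J - R) * Q) * T⁻¹ := by
  rw [← Matrix.sub_mul, ← Matrix.mul_sub]
  calc T * (J - R) * Tᵀ * ((T⁻¹)ᵀ * Q * T⁻¹)
      = T * (J - R) * (Tᵀ * (T⁻¹)ᵀ) * Q * T⁻¹ := by simp only [Matrix.mul_assoc]
    _ = T * ((J - R) * Q) * T⁻¹ := by
      rw [transpose_mul_transpose_nonsing_inv hT, Matrix.mul_one, Matrix.mul_assoc T]

theorem congr_inv_gram (Q : Matrix ι ι K) (V : Matrix ι ρ K) :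
    (T * V)ᵀ * ((T⁻¹)ᵀ * Q * T⁻¹) * (T * V) = Vᵀ * Q * V := by
  calc (T * V)ᵀ * ((T⁻¹)ᵀ * Q * T⁻¹) * (T * V)
      = Vᵀ * (Tᵀ * (T⁻¹)ᵀ) * Q * (T⁻¹ * T) * V := by
        simp only [transpose_mul, Matrix.mul_assoc]
    _ = Vᵀ * Q * V := by
      rw [transpose_mul_transpose_nonsing_inv hT, nonsing_inv_mul T hT, Matrix.mul_one,
        Matrix.mul_one]

theorem congr_inv_projection (Q : Matrix ι ι K) [Fintype ρ] [DecidableEq ρ] (V : Matrix ι ρ K) :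
    (T⁻¹)ᵀ * Q * T⁻¹ * (T * V) * ((T * V)ᵀ * ((T⁻¹)ᵀ * Q * T⁻¹) * (T * V))⁻¹ =
      (T⁻¹)ᵀ * (Q * V * (Vᵀ * Q * V)⁻¹) := by
  rw [congr_inv_gram hT, Matrix.mul_assoc _ T⁻¹, nonsing_inv_mul_cancel_left T V hT]
  simp only [Matrix.mul_assoc]

theorem transpose_inv_transpose_mul_conj_mul (W : Matrix ι ρ K) (X : Matrix ι ι K) :
    ((T⁻¹)ᵀ * W)ᵀ * (T * X * Tᵀ) * ((T⁻¹)ᵀ * W) = Wᵀ * X * W := by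
  calc ((T⁻¹)ᵀ * W)ᵀ * (T * X * Tᵀ) * ((T⁻¹)ᵀ * W)
      = Wᵀ * (T⁻¹ * T) * X * (Tᵀ * (T⁻¹)ᵀ) * W := by
        simp only [transpose_mul, transpose_transpose, Matrix.mul_assoc]
    _ = Wᵀ * X * W := by
      rw [nonsing_inv_mul T hT, transpose_mul_transpose_nonsing_inv hT, Matrix.mul_one,
        Matrix.mul_one]

theorem transpose_inv_transpose_mul_mul (W : Matrix ι ρ K) (B : Matrix ι κ K) :
    ((T⁻¹)ᵀ * W)ᵀ * (T * B) = Wᵀ * B := by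
  rw [transpose_mul, transpose_transpose, Matrix.mul_assoc, nonsing_inv_mul_cancel_left T B hT]

theorem inv_smul_one_sub_map_congr_mul {L : Type*} [CommRing L] (f : K →+* L) (s : L)
    (J R Q : Matrix ι ι K) (B : Matrix ι κ K) :
    (s • 1 - ((T * J * Tᵀ - T * R * Tᵀ) * ((T⁻¹)ᵀ * Q * T⁻¹)).map f)⁻¹ * (T * B).map f =
      T.map f * ((s • 1 - ((J - R) * Q).map f)⁻¹ * B.map f) := by
  have hTf : IsUnit (T.map f).det := by
    rw [← RingHom.mapMatrix_apply, ← RingHom.map_det]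
    exact hT.map f
  have hconj : (T * ((J - R) * Q) * T⁻¹).map f =
      T.map f * ((J - R) * Q).map f * (T.map f)⁻¹ := by
    rw [Matrix.map_mul, Matrix.map_mul (L := T), map_nonsing_inv f hT]
  rw [conj_sub_conj_mul_congr_inv hT, hconj, Matrix.map_mul (L := T) (M := B)]
  exact inv_smul_one_sub_conj_mul hTf s _ _

end CommRing

end Matrix

theorem stmt11_general (n m r : ℕ) (J R Q : Matrix (Fin n) (Fin n) ℝ) (B : Matrix (Fin n) (Fin m) ℝ)
    (T : Matrix (Fin n) (Fin n) ℝ) (hT : IsUnit T.det)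
    (s : Fin r → ℂ) (b : Fin r → Fin m → ℂ)
    (V Vt : Matrix (Fin n) (Fin r) ℂ)
    (hV : ∀ i j, V j i =
      (((s i • (1 : Matrix (Fin n) (Fin n) ℂ) - ((J - R) * Q).map Complex.ofReal)⁻¹ *
        B.map Complex.ofReal) *ᵥ b i) j)
    (hVt : ∀ i j, Vt j i =
      (((s i • (1 : Matrix (Fin n) (Fin n) ℂ) -
          ((T * J * Tᵀ - T * R * Tᵀ) * ((T⁻¹)ᵀ * Q * T⁻¹)).map Complex.ofReal)⁻¹ *
        (T * B).map Complex.ofReal) *ᵥ b i) j)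
    (M : Matrix (Fin r) (Fin r) ℂ)
    (Vh : Matrix (Fin n) (Fin r) ℝ) (hVh : Vh.map Complex.ofReal = V * M) :
    Vt = T.map Complex.ofReal * V ∧
    ((T * Vh).map Complex.ofReal = Vt * M ∧
    (let W : Matrix (Fin n) (Fin r) ℝ := Q * Vh * (Vhᵀ * Q * Vh)⁻¹
     let Wt : Matrix (Fin n) (Fin r) ℝ :=
       ((T⁻¹)ᵀ * Q * T⁻¹) * (T * Vh) * ((T * Vh)ᵀ * ((T⁻¹)ᵀ * Q * T⁻¹) * (T * Vh))⁻¹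
     Wtᵀ * (T * J * Tᵀ) * Wt = Wᵀ * J * W ∧
     Wtᵀ * (T * R * Tᵀ) * Wt = Wᵀ * R * W ∧
     (T * Vh)ᵀ * ((T⁻¹)ᵀ * Q * T⁻¹) * (T * Vh) = Vhᵀ * Q * Vh ∧
     Wtᵀ * (T * B) = Wᵀ * B)) := by
  have hVtV : Vt = T.map Complex.ofReal * V :=
    eq_mul_of_cols hV hVt fun i =>
      inv_smul_one_sub_map_congr_mul hT Complex.ofRealHom (s i) J R Q B
  have hTVh : (T * Vh).map Complex.ofReal = T.map Complex.ofReal * Vh.map Complex.ofReal :=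
    Matrix.map_mul (f := Complex.ofRealHom)
  refine ⟨hVtV, ?_, ?_⟩
  · rw [hTVh, hVh, hVtV, Matrix.mul_assoc]
  · intro W Wt
    have hWt : Wt = (T⁻¹)ᵀ * W := congr_inv_projection hT Q Vh
    rw [hWt]
    exact ⟨transpose_inv_transpose_mul_conj_mul hT W J,
      transpose_inv_transpose_mul_conj_mul hT W R, congr_inv_gram hT Q Vh,
      transpose_inv_transpose_mul_mul hT W B⟩

theorem stmt11 (n m r : ℕ) (J R Q : Matrix (Fin n) (Fin n) ℝ) (B : Matrix (Fin n) (Fin m) ℝ)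
    (hJ : Jᵀ = -J) (hR : R.PosSemidef) (hQ : Q.PosDef)
    (T : Matrix (Fin n) (Fin n) ℝ) (hT : IsUnit T.det)
    (s : Fin r → ℂ) (hs : Function.Injective s) (b : Fin r → Fin m → ℂ)
    (hsclosed : ∀ i, ∃ j, s j = (starRingEnd ℂ) (s i) ∧ b j = fun k => (starRingEnd ℂ) (b i k))
    (hres : ∀ i, IsUnit (s i • (1 : Matrix (Fin n) (Fin n) ℂ)
        - ((J - R) * Q).map Complex.ofReal).det)
    (V Vt : Matrix (Fin n) (Fin r) ℂ)
    (hV : ∀ i j, V j i =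
      (((s i • (1 : Matrix (Fin n) (Fin n) ℂ) - ((J - R) * Q).map Complex.ofReal)⁻¹ *
        B.map Complex.ofReal) *ᵥ b i) j)
    (hVt : ∀ i j, Vt j i =
      (((s i • (1 : Matrix (Fin n) (Fin n) ℂ) -
          ((T * J * Tᵀ - T * R * Tᵀ) * ((T⁻¹)ᵀ * Q * T⁻¹)).map Complex.ofReal)⁻¹ *
        (T * B).map Complex.ofReal) *ᵥ b i) j)
    (M : Matrix (Fin r) (Fin r) ℂ) (hM : IsUnit M.det)
    (Vh : Matrix (Fin n) (Fin r) ℝ) (hVh : Vh.map Complex.ofReal = V * M)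
    (hrank : Vh.rank = r) :
    Vt = T.map Complex.ofReal * V ∧
    ((T * Vh).map Complex.ofReal = Vt * M ∧
    (let W : Matrix (Fin n) (Fin r) ℝ := Q * Vh * (Vhᵀ * Q * Vh)⁻¹
     let Wt : Matrix (Fin n) (Fin r) ℝ :=
       ((T⁻¹)ᵀ * Q * T⁻¹) * (T * Vh) * ((T * Vh)ᵀ * ((T⁻¹)ᵀ * Q * T⁻¹) * (T * Vh))⁻¹
     Wtᵀ * (T * J * Tᵀ) * Wt = Wᵀ * J * W ∧
     Wtᵀ * (T * R * Tᵀ) * Wt = Wᵀ * R * W ∧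
     (T * Vh)ᵀ * ((T⁻¹)ᵀ * Q * T⁻¹) * (T * Vh) = Vhᵀ * Q * Vh ∧
     Wtᵀ * (T * B) = Wᵀ * B)) :=
  stmt11_general n m r J R Q B T hT s b V Vt hV hVt M Vh hVh
end
end
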